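/- Let r ≥ 1 and let z = (z₀⁽¹⁾, z₁⁽¹⁾, z₂⁽¹⁾, z₀⁽²⁾) ∈ Mat(2r × 4r, ℂ) be written in blocks in Mat(2r × r, ℂ), and assume det(z₀⁽¹⁾ | z₁⁽¹⁾) ≠ 0 and det(z₀⁽¹⁾ | z₀⁽²⁾) ≠ 0. Then there exist g ∈ GL(2r, ℂ), h ∈ H_{(3,1)}, and x'' ∈ Mat(r×r, ℂ) such that g · z · h is the 2r×4r matrix with block rows (1_r, 0, 0, x'') and (0, 1_r, 0, −1_r). -/

import Mathlib

open Matrix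

/-- The `2r × nr` matrix assembled from `n` block columns of size `2r × r`. -/
def ofBlockCols (r n : ℕ) (z : Fin n → Matrix (Fin r ⊕ Fin r) (Fin r) ℂ) :
    Matrix (Fin r ⊕ Fin r) (Fin n × Fin r) ℂ :=
  Matrix.of fun i jk => z jk.1 i jk.2

/-- The `nr × nr` matrix assembled from an `n × n` array of `r × r` blocks. -/
def ofBlockMat (r n : ℕ) (H : Fin n → Fin n → Matrix (Fin r) (Fin r) ℂ) :
    Matrix (Fin n × Fin r) (Fin n × Fin r) ℂ :=
  Matrix.of fun jk lk => H jk.1 lk.1 jk.2 lk.2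

/-! Since `(z₀ | z₁)` is invertible, `z₂ = z₀ a + z₁ b`. Taking `h₀ = 1`, `h₁ = -b`, `h₂ = -a`
kills the third block column of `z h`, and `g = (z₀ | z₁ - z₀ b)⁻¹` turns the first two into
`(1; 0)` and `(0; 1)`. Then `g z₃ = (p; q)` with `det q = det g · det (z₀ | z₃) ≠ 0`, and
`k = -q⁻¹` brings the last block column to `(-p q⁻¹; -1)`. -/

section BlockColumns

variable {r n : ℕ}

lemma mul_ofBlockCols (g : Matrix (Fin r ⊕ Fin r) (Fin r ⊕ Fin r) ℂ)
    (z : Fin n → Matrix (Fin r ⊕ Fin r) (Fin r) ℂ) :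
    g * ofBlockCols r n z = ofBlockCols r n fun j => g * z j := by
  ext i ⟨j, k⟩
  simp [ofBlockCols, mul_apply]

lemma ofBlockCols_mul_ofBlockMat (z : Fin n → Matrix (Fin r ⊕ Fin r) (Fin r) ℂ)
    (H : Fin n → Fin n → Matrix (Fin r) (Fin r) ℂ) :
    ofBlockCols r n z * ofBlockMat r n H = ofBlockCols r n fun l => ∑ j, z j * H j l := by
  ext i ⟨l, k⟩
  simp [ofBlockCols, ofBlockMat, mul_apply, Fintype.sum_prod_type, Matrix.sum_apply]

end BlockColumns

lemma sum_mul_jordanBlocks_three_one {R m n : Type*} [Ring R] [Fintype n]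
    (z : Fin 4 → Matrix m n R) (h₀ h₁ h₂ k : Matrix n n R) :
    (fun l => ∑ j, z j * ![![h₀, h₁, h₂, 0], ![0, h₀, h₁, 0], ![0, 0, h₀, 0], ![0, 0, 0, k]] j l)
      = ![z 0 * h₀, z 0 * h₁ + z 1 * h₀, z 0 * h₂ + z 1 * h₁ + z 2 * h₀, z 3 * k] := by
  ext1 l
  fin_cases l <;> simp [Fin.sum_univ_four]

section Partitioned

variable {R m n : Type*} [CommRing R] [Fintype m] [Fintype n] [DecidableEq m] [DecidableEq n]

lemma inv_mul_fromCols_self (a : Matrix (m ⊕ n) m R) (b : Matrix (m ⊕ n) n R)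
    (h : IsUnit (fromCols a b).det) :
    fromCols ((fromCols a b)⁻¹ * a) ((fromCols a b)⁻¹ * b)
      = fromCols (fromRows 1 0) (fromRows 0 1) := by
  rw [← mul_fromCols, nonsing_inv_mul _ h, fromCols_fromRows_eq_fromBlocks, fromBlocks_one]

lemma exists_eq_mul_add_mul_of_isUnit_det_fromCols {p : Type*} (a : Matrix (m ⊕ n) m R)
    (b : Matrix (m ⊕ n) n R) (h : IsUnit (fromCols a b).det) (c : Matrix (m ⊕ n) p R) :
    ∃ (x : Matrix m p R) (y : Matrix n p R), c = a * x + b * y :=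
  ⟨toRows₁ ((fromCols a b)⁻¹ * c), toRows₂ ((fromCols a b)⁻¹ * c), by
    rw [← fromCols_mul_fromRows, fromRows_toRows, ← Matrix.mul_assoc, mul_nonsing_inv _ h,
      Matrix.one_mul]⟩

lemma det_fromCols_mul_add (a : Matrix (m ⊕ n) m R) (b : Matrix (m ⊕ n) n R)
    (c : Matrix m n R) : (fromCols a (a * c + b)).det = (fromCols a b).det := by
  have : fromCols a (a * c + b) = fromCols a b * fromBlocks 1 c 0 1 := by
    simp [fromCols_mul_fromBlocks]
  rw [this, det_mul, det_fromBlocks_zero₂₁, det_one, det_one, mul_one, mul_one]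

lemma det_fromCols_fromRows_one_zero (p : Matrix m n R) (q : Matrix n n R) :
    (fromCols (fromRows 1 0) (fromRows p q)).det = q.det := by
  rw [fromCols_fromRows_eq_fromBlocks, det_fromBlocks_zero₂₁, det_one, one_mul]

lemma det_toRows₂_mul_of_mul_eq_fromRows_one_zero {g : Matrix (m ⊕ n) (m ⊕ n) R}
    {a : Matrix (m ⊕ n) m R} (c : Matrix (m ⊕ n) n R) (h : g * a = fromRows 1 0) :
    (toRows₂ (g * c)).det = g.det * (fromCols a c).det := by
  rw [← det_mul, mul_fromCols, h, ← det_fromCols_fromRows_one_zero (toRows₁ (g * c)),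
    fromRows_toRows]

end Partitioned

theorem normal_form_partition_31_third_general (r : ℕ)
    (z : Fin 4 → Matrix (Fin r ⊕ Fin r) (Fin r) ℂ)
    (h01 : (fromCols (z 0) (z 1)).det ≠ 0)
    (h03 : (fromCols (z 0) (z 3)).det ≠ 0) :
    ∃ (g : GL (Fin r ⊕ Fin r) ℂ) (h₀ k : GL (Fin r) ℂ)
      (h₁ h₂ : Matrix (Fin r) (Fin r) ℂ) (x'' : Matrix (Fin r) (Fin r) ℂ),
      (g : Matrix (Fin r ⊕ Fin r) (Fin r ⊕ Fin r) ℂ) * ofBlockCols r 4 z *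
          ofBlockMat r 4
            ![![(h₀ : Matrix (Fin r) (Fin r) ℂ), h₁, h₂, 0],
              ![0, (h₀ : Matrix (Fin r) (Fin r) ℂ), h₁, 0],
              ![0, 0, (h₀ : Matrix (Fin r) (Fin r) ℂ), 0],
              ![0, 0, 0, (k : Matrix (Fin r) (Fin r) ℂ)]] =
        ofBlockCols r 4
          ![fromRows 1 0, fromRows 0 1, 0, fromRows x'' (-1)] := by
  obtain ⟨a, b, hz2⟩ := exists_eq_mul_add_mul_of_isUnit_det_fromCols _ _ h01.isUnit (z 2)
  have hw : (fromCols (z 0) (z 0 * -b + z 1)).det ≠ 0 := by rwa [det_fromCols_mul_add]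
  set w := fromCols (z 0) (z 0 * -b + z 1)
  obtain ⟨hg0, hg1⟩ := (fromCols_ext_iff _ _ _ _).mp (inv_mul_fromCols_self _ _ hw.isUnit)
  set p := toRows₁ (w⁻¹ * z 3)
  set q := toRows₂ (w⁻¹ * z 3)
  have hg3 : w⁻¹ * z 3 = fromRows p q := (fromRows_toRows _).symm
  have hq : q.det ≠ 0 := by
    rw [det_toRows₂_mul_of_mul_eq_fromRows_one_zero _ hg0, det_nonsing_inv, Ring.inverse_eq_inv']
    exact mul_ne_zero (inv_ne_zero hw) h03
  have hcol2 : z 0 * -a + z 1 * -b + z 2 = 0 := by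
    rw [hz2, Matrix.mul_neg, Matrix.mul_neg]
    abel
  refine ⟨(GeneralLinearGroup.mkOfDetNeZero w hw)⁻¹, 1,
    -(GeneralLinearGroup.mkOfDetNeZero q hq)⁻¹, -b, -a, -(p * q⁻¹), ?_⟩
  simp only [coe_units_inv, Units.val_neg, Units.val_one, GeneralLinearGroup.val_mkOfDetNeZero]
  rw [Matrix.mul_assoc, ofBlockCols_mul_ofBlockMat, sum_mul_jordanBlocks_three_one,
    mul_ofBlockCols]
  congr 1
  ext1 l
  fin_cases l <;> dsimp
  · rw [Matrix.mul_one]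
    exact hg0
  · rw [Matrix.mul_one]
    exact hg1
  · rw [Matrix.mul_one, hcol2, Matrix.mul_zero]
  · rw [← Matrix.mul_assoc, hg3, fromRows_mul, mul_neg, mul_neg, mul_nonsing_inv q hq.isUnit]

/-- Normal form lemma (form `x₃`) for `(m, N) = (2r, 4r)`, partition `λ = (3,1)`:
`z = (z₀⁽¹⁾, z₁⁽¹⁾, z₂⁽¹⁾, z₀⁽²⁾)` with `det(z₀⁽¹⁾ | z₁⁽¹⁾) ≠ 0` and
`det(z₀⁽¹⁾ | z₀⁽²⁾) ≠ 0` can be brought, by the action of `GL(2r, ℂ) × H_{(3,1)}`,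
to the normal form with block rows `(1_r, 0, 0, x'')` and `(0, 1_r, 0, −1_r)`. -/
theorem normal_form_partition_31_third (r : ℕ) (hr : 1 ≤ r)
    (z : Fin 4 → Matrix (Fin r ⊕ Fin r) (Fin r) ℂ)
    (h01 : (fromCols (z 0) (z 1)).det ≠ 0)
    (h03 : (fromCols (z 0) (z 3)).det ≠ 0) :
    ∃ (g : GL (Fin r ⊕ Fin r) ℂ) (h₀ k : GL (Fin r) ℂ)
      (h₁ h₂ : Matrix (Fin r) (Fin r) ℂ) (x'' : Matrix (Fin r) (Fin r) ℂ),
      (g : Matrix (Fin r ⊕ Fin r) (Fin r ⊕ Fin r) ℂ) * ofBlockCols r 4 z *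
          ofBlockMat r 4
            ![![(h₀ : Matrix (Fin r) (Fin r) ℂ), h₁, h₂, 0],
              ![0, (h₀ : Matrix (Fin r) (Fin r) ℂ), h₁, 0],
              ![0, 0, (h₀ : Matrix (Fin r) (Fin r) ℂ), 0],
              ![0, 0, 0, (k : Matrix (Fin r) (Fin r) ℂ)]] =
        ofBlockCols r 4
          ![fromRows 1 0, fromRows 0 1, 0, fromRows x'' (-1)] :=
  normal_form_partition_31_third_general r z h01 h03
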